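/- Let c ∈ ℝ, A ∈ ℝ, ψ : V → ℝ with A ≤ ψ_i for all i, and suppose u minimizes the functional I(f) = (1/2)·Σ_{{i,j}∈E} ω_{ij}(f_i − f_j)² + c·Σ_{i∈V} μ_i f_i − Σ_{i∈V} μ_i h_i e^{f_i} (first sum over unordered edges) over K = {f : V → ℝ : A ≤ f_i ≤ ψ_i for all i}, and that A < u_i < ψ_i for every i (u is interior to K). Then u solves the Kazdan–Warner equation: (Δu)_i = c − h_i·e^{u_i} for all i ∈ V. -/

import Mathlib

/-- The graph Laplacian: `(Δ f)_i = (1/μ_i) ∑_{j ∼ i} ω_{ij} (f_j - f_i)`. -/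
noncomputable def glap {V : Type*} [Fintype V] (G : SimpleGraph V) [DecidableRel G.Adj]
    (μ : V → ℝ) (ω : V → V → ℝ) (f : V → ℝ) (i : V) : ℝ :=
  (1 / μ i) * ∑ j ∈ G.neighborFinset i, ω i j * (f j - f i)

/-- The functional `I(f) = (1/2) ∑_{{i,j} ∈ E} ω_{ij}(f_i - f_j)² + c ∑_i μ_i f_i
- ∑_i μ_i h_i e^{f_i}`.  Since `ω` is symmetric, the sum over unordered edges equals half
the sum over ordered adjacent pairs, whence the factor `1/4` below. -/
noncomputable def kwEnergy {V : Type*} [Fintype V] (G : SimpleGraph V) [DecidableRel G.Adj]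
    (μ : V → ℝ) (ω : V → V → ℝ) (c : ℝ) (h : V → ℝ) (f : V → ℝ) : ℝ :=
  (1 / 4) * ∑ i, ∑ j ∈ G.neighborFinset i, ω i j * (f i - f j) ^ 2
    + c * ∑ i, μ i * f i - ∑ i, μ i * h i * Real.exp (f i)

/-!
For interior `u` and any direction `v`, the line `u + t • v` stays in `K` for small `t`, so
`t ↦ I(u + t • v)` has a local minimum at `0`. By the discrete Green formula its derivative
there is `∑ i, μ i * v i * (c - h i * exp (u i) - (Δ u) i)`; taking for `v` the indicator of a
vertex gives the equation at that vertex.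
-/

open Finset

namespace SimpleGraph

variable {V : Type*} [Fintype V] (G : SimpleGraph V) [DecidableRel G.Adj]

theorem sum_sum_neighborFinset_comm {M : Type*} [AddCommMonoid M] (g : V → V → M) :
    ∑ i, ∑ j ∈ G.neighborFinset i, g i j = ∑ i, ∑ j ∈ G.neighborFinset i, g j i := by
  simp only [neighborFinset_eq_filter, sum_filter]
  rw [Finset.sum_comm]
  simp only [G.adj_comm]

end SimpleGraph

section KazdanWarner

variable {V : Type*} [Fintype V] (G : SimpleGraph V) [DecidableRel G.Adj]
  {μ : V → ℝ} {ω : V → V → ℝ}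

-- Discrete Green formula.
theorem sum_sum_neighborFinset_grad_mul_grad_eq_glap (hμ : ∀ i, μ i ≠ 0)
    (hsym : ∀ i j, ω i j = ω j i) (u v : V → ℝ) :
    ∑ i, ∑ j ∈ G.neighborFinset i, ω i j * ((u i - u j) * (v i - v j))
      = -2 * ∑ i, μ i * v i * glap G μ ω u i := by
  have hsplit : ∀ i j, ω i j * ((u i - u j) * (v i - v j))
      = ω i j * (u i - u j) * v i - ω i j * (u i - u j) * v j := fun i j => by ring
  have hswap := G.sum_sum_neighborFinset_comm fun i j => ω i j * (u i - u j) * v j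
  simp only [hsplit, sum_sub_distrib, hswap]
  rw [← sum_sub_distrib, mul_sum]
  refine sum_congr rfl fun i _ => ?_
  rw [glap, ← sum_sub_distrib, mul_sum, mul_sum, mul_sum]
  field_simp [hμ i]
  refine sum_congr rfl fun j _ => ?_
  rw [hsym j i]
  ring

theorem hasDerivAt_kwEnergy_add_smul (c : ℝ) (h u v : V → ℝ) :
    HasDerivAt (fun t : ℝ => kwEnergy G μ ω c h (u + t • v))
      ((1 / 4) * ∑ i, ∑ j ∈ G.neighborFinset i, ω i j * (2 * (u i - u j) * (v i - v j))
        + c * ∑ i, μ i * v i - ∑ i, μ i * h i * (Real.exp (u i) * v i)) 0 := by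
  have hline : ∀ i, HasDerivAt (fun t : ℝ => u i + t * v i) (v i) 0 := fun i => by
    simpa using ((hasDerivAt_id (0 : ℝ)).mul_const (v i)).const_add (u i)
  simp only [kwEnergy, Pi.add_apply, Pi.smul_apply, smul_eq_mul]
  refine (HasDerivAt.const_mul _ (HasDerivAt.fun_sum fun i _ => HasDerivAt.fun_sum fun j _ =>
      ?_)).add (HasDerivAt.const_mul _ (HasDerivAt.fun_sum fun i _ => ?_)) |>.sub
      (HasDerivAt.fun_sum fun i _ => ?_)
  · simpa using (((hline i).sub (hline j)).pow 2).const_mul (ω i j)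
  · exact (hline i).const_mul (μ i)
  · simpa using (hline i).exp.const_mul (μ i * h i)

theorem hasDerivAt_kwEnergy_add_smul_of_symm (hμ : ∀ i, μ i ≠ 0) (hsym : ∀ i j, ω i j = ω j i)
    (c : ℝ) (h u v : V → ℝ) :
    HasDerivAt (fun t : ℝ => kwEnergy G μ ω c h (u + t • v))
      (∑ i, μ i * v i * (c - h i * Real.exp (u i) - glap G μ ω u i)) 0 := by
  convert hasDerivAt_kwEnergy_add_smul G c h u v using 1
  have htwo : ∀ i j, ω i j * (2 * (u i - u j) * (v i - v j))
      = 2 * (ω i j * ((u i - u j) * (v i - v j))) := fun i j => by ring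
  simp only [htwo, ← mul_sum]
  rw [sum_sum_neighborFinset_grad_mul_grad_eq_glap G hμ hsym]
  simp only [mul_sum, ← sum_add_distrib, ← sum_sub_distrib]
  exact sum_congr rfl fun i _ => by ring

theorem eventually_forall_mem_Icc_add_smul {lo hi u : V → ℝ}
    (hu : ∀ i, lo i < u i ∧ u i < hi i) (v : V → ℝ) :
    ∀ᶠ t in nhds (0 : ℝ), ∀ i, lo i ≤ (u + t • v) i ∧ (u + t • v) i ≤ hi i := by
  refine Filter.eventually_all.2 fun i => ?_
  have hcont : Continuous fun t : ℝ => (u + t • v) i := by fun_prop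
  filter_upwards [hcont.tendsto 0 |>.eventually (isOpen_Ioo.mem_nhds (by simpa using hu i))]
    with t ht using ⟨ht.1.le, ht.2.le⟩

end KazdanWarner

theorem stmt_13_general {V : Type*} [Fintype V] (G : SimpleGraph V) [DecidableRel G.Adj]
    (μ : V → ℝ) (hμ : ∀ i, 0 < μ i)
    (ω : V → V → ℝ) (hsym : ∀ i j, ω i j = ω j i)
    (h : V → ℝ) (c : ℝ) (A : ℝ) (ψ : V → ℝ)
    (u : V → ℝ)
    (hmin : ∀ f : V → ℝ, (∀ i, A ≤ f i ∧ f i ≤ ψ i) →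
      kwEnergy G μ ω c h u ≤ kwEnergy G μ ω c h f)
    (hint : ∀ i, A < u i ∧ u i < ψ i) :
    ∀ i, glap G μ ω u i = c - h i * Real.exp (u i) := by
  classical
  have hcrit : ∀ v : V → ℝ,
      ∑ i, μ i * v i * (c - h i * Real.exp (u i) - glap G μ ω u i) = 0 := fun v => by
    have hloc : IsLocalMin (fun t : ℝ => kwEnergy G μ ω c h (u + t • v)) 0 := by
      filter_upwards [eventually_forall_mem_Icc_add_smul (lo := fun _ => A) hint v]
        with t ht using by simpa using hmin _ ht
    exact hloc.hasDerivAt_eq_zero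
      (hasDerivAt_kwEnergy_add_smul_of_symm G (fun i => (hμ i).ne') hsym c h u v)
  intro i
  have hi := hcrit (Pi.single i 1)
  simp only [Pi.single_apply, mul_ite, mul_one, mul_zero, ite_mul, zero_mul,
    sum_ite_eq', mem_univ, if_true] at hi
  linarith [(mul_eq_zero.1 hi).resolve_left (hμ i).ne']

/-- If `u` minimizes the functional `I` over `K = {f : A ≤ f ≤ ψ}` and `u` is interior to
`K` (i.e. `A < u_i < ψ_i` for all `i`), then `u` solves the Kazdan–Warner equation
`Δ u = c - h e^u`. -/
theorem stmt_13 {V : Type*} [Fintype V] (G : SimpleGraph V) [DecidableRel G.Adj]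
    (hconn : G.Connected)
    (μ : V → ℝ) (hμ : ∀ i, 0 < μ i)
    (ω : V → V → ℝ) (hsym : ∀ i j, ω i j = ω j i)
    (hω : ∀ i j, G.Adj i j → 0 < ω i j)
    (h : V → ℝ) (c : ℝ) (A : ℝ) (ψ : V → ℝ)
    (hAψ : ∀ i, A ≤ ψ i)
    (u : V → ℝ)
    (huK : ∀ i, A ≤ u i ∧ u i ≤ ψ i)
    (hmin : ∀ f : V → ℝ, (∀ i, A ≤ f i ∧ f i ≤ ψ i) →
      kwEnergy G μ ω c h u ≤ kwEnergy G μ ω c h f)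
    (hint : ∀ i, A < u i ∧ u i < ψ i) :
    ∀ i, glap G μ ω u i = c - h i * Real.exp (u i) :=
  stmt_13_general G μ hμ ω hsym h c A ψ u hmin hint
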